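/- arXiv:1807.08432 — 5 statements merged into one kernel-verified Lean document; each statement's English description precedes it below -/
import Mathlib

section
/- (Boundary preservation, part of Proposition 1) Assume ε_j > 0 for all j and the sets {x ∈ ℝ² | β_i(x) ≤ ε_i}, i = 1, …, M, are pairwise disjoint. If x ∈ ℝ² satisfies β_k(x) = 0 for some index k and x ≠ x*_k, then h(x) = x*_k + (ρ_k/‖x − x*_k‖)(x − x*_k); in particular ‖h(x) − x*_k‖ = ρ_k, so h maps the boundary of the k-th star-shaped obstacle onto the circle of radius ρ_k centered at x*_k. -/
noncomputable section

/-- The C∞ function ζ: ζ(χ) = exp(−1/χ) for χ > 0 and ζ(χ) = 0 for χ ≤ 0. -/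
def zeta (χ : ℝ) : ℝ := if 0 < χ then Real.exp (-1 / χ) else 0

/-- For ε > 0, η_ε(χ) = ζ(ε − χ)/ζ(ε). -/
def eta (ε χ : ℝ) : ℝ := zeta (ε - χ) / zeta ε

/-- (Boundary preservation, part of Proposition 1) If the thickened sets are pairwise disjoint
and β_k(x) = 0 for some k with x ≠ x*_k, then
h(x) = x*_k + (ρ_k/‖x − x*_k‖)(x − x*_k), hence ‖h(x) − x*_k‖ = ρ_k: the boundary of the
k-th star-shaped obstacle is mapped onto the circle of radius ρ_k centered at x*_k. -/
theorem boundary_maps_to_circle (M : ℕ)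
    (β : Fin M → EuclideanSpace ℝ (Fin 2) → ℝ)
    (ε : Fin M → ℝ) (hε : ∀ j, 0 < ε j)
    (hdisj : ∀ i j, i ≠ j →
      {x : EuclideanSpace ℝ (Fin 2) | β i x ≤ ε i} ∩ {x | β j x ≤ ε j} = ∅)
    (xstar : Fin M → EuclideanSpace ℝ (Fin 2))
    (ρ : Fin M → ℝ) (hρ : ∀ j, 0 < ρ j)
    (σ : Fin M → EuclideanSpace ℝ (Fin 2) → ℝ)
    (hσ : ∀ j x, σ j x = eta (ε j) (β j x))
    (σd : EuclideanSpace ℝ (Fin 2) → ℝ) (hσd : ∀ x, σd x = 1 - ∑ j, σ j x)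
    (ν : Fin M → EuclideanSpace ℝ (Fin 2) → ℝ)
    (hν : ∀ j y, ν j y = ρ j / ‖y - xstar j‖)
    (h : EuclideanSpace ℝ (Fin 2) → EuclideanSpace ℝ (Fin 2))
    (hh : ∀ x, h x = (∑ j, σ j x • (ν j x • (x - xstar j) + xstar j)) + σd x • x)
    (x : EuclideanSpace ℝ (Fin 2)) (k : Fin M) (hxk : β k x = 0) (hxne : x ≠ xstar k) :
    h x = xstar k + (ρ k / ‖x - xstar k‖) • (x - xstar k) ∧
      ‖h x - xstar k‖ = ρ k := by

  have hzpos : zeta (ε k) > 0 := by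
    unfold zeta; rw [if_pos (hε k)]; exact Real.exp_pos _
  have hσk : σ k x = 1 := by
    rw [hσ, hxk]; unfold eta; rw [sub_zero]; exact div_self (ne_of_gt hzpos)
  have hσj : ∀ j, j ≠ k → σ j x = 0 := by
    intro j hjk
    have hβj : ε j < β j x := by
      by_contra hle
      push_neg at hle
      have hx : x ∈ ({x : EuclideanSpace ℝ (Fin 2) | β j x ≤ ε j} ∩ {x | β k x ≤ ε k}) :=
        ⟨hle, by simp [hxk, (hε k).le]⟩
      rw [hdisj j k hjk] at hx
      exact hx
    rw [hσ]; unfold eta zeta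
    rw [if_neg (by linarith)]
    simp
  have hsum : ∑ j, σ j x = 1 := by
    rw [Finset.sum_eq_single k (fun j _ hj => hσj j hj) (by simp)]
    exact hσk
  have hσdx : σd x = 0 := by rw [hσd, hsum]; ring
  have hnne : ‖x - xstar k‖ ≠ 0 := by
    simpa [sub_eq_zero] using hxne
  have hhx : h x = xstar k + (ρ k / ‖x - xstar k‖) • (x - xstar k) := by
    rw [hh, hσdx, zero_smul, add_zero,
      Finset.sum_eq_single k (fun j _ hj => by rw [hσj j hj, zero_smul]) (by simp),
      hσk, one_smul, hν, add_comm]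
  refine ⟨hhx, ?_⟩
  rw [hhx]
  rw [add_sub_cancel_left, norm_smul, norm_div, Real.norm_eq_abs, Real.norm_eq_abs,
    abs_of_pos (hρ k), abs_of_nonneg (norm_nonneg _),
    div_mul_cancel₀ _ hnne]
end
end

section
/- (Core of Proposition 1) Let σ, η', ρ ∈ ℝ and u, g ∈ ℝ² with u ≠ 0, set ν = ρ/‖u‖, and let A = (1 + σ(ν − 1))·I + u·wᵀ with w = −(ρσ/‖u‖³)·u + η'(ν − 1)·g. If 0 < σ ≤ 1, 0 < ρ < ‖u‖ (so that 0 < ν < 1), η' < 0, and ⟨u, g⟩ > 0, then det A > 0 and trace A > 0; in particular A is invertible. -/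
/-!
The rank-one perturbation `A = c • 1 + u wᵀ` of a multiple of the identity has eigenvalues `c` and
`c + ⟪u, w⟫`, so `det A = c (c + ⟪u, w⟫)` and `trace A = c + (c + ⟪u, w⟫)`. Here `c = 1 - σ (1 - ν)`
is positive because `σ ≤ 1` and `0 < ν < 1`, while `⟪u, w⟫ = -σν + η' (ν - 1) ⟪u, g⟫`, so that
`c + ⟪u, w⟫ = 1 - σ + η' (ν - 1) ⟪u, g⟫`, whose last term is positive because `η'` and `ν - 1` are
both negative.
-/

noncomputable section
open RealInnerProductSpace

namespace Matrix

variable {R : Type*} [CommRing R]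

theorem det_fin_two_smul_one_add_vecMulVec (c : R) (u w : Fin 2 → R) :
    (c • (1 : Matrix (Fin 2) (Fin 2) R) + vecMulVec u w).det = c * (c + u ⬝ᵥ w) := by
  simp only [det_fin_two, add_apply, smul_apply, one_apply_eq, one_apply_ne, smul_eq_mul,
    mul_one, mul_zero, zero_add, vecMulVec_apply, ne_eq, zero_ne_one, one_ne_zero,
    not_false_eq_true, dotProduct, Fin.sum_univ_two]
  ring

theorem trace_smul_one_add_vecMulVec {n : Type*} [Fintype n] [DecidableEq n] (c : R)
    (u w : n → R) :
    (c • (1 : Matrix n n R) + vecMulVec u w).trace = Fintype.card n * c + u ⬝ᵥ w := by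
  rw [trace_add, trace_smul, trace_one, trace_vecMulVec, smul_eq_mul, mul_comm]

end Matrix

theorem EuclideanSpace.dotProduct_eq_real_inner {ι : Type*} [Fintype ι]
    (u w : EuclideanSpace ℝ ι) : (fun i => u i) ⬝ᵥ (fun i => w i) = ⟪u, w⟫ := by
  rw [EuclideanSpace.inner_eq_star_dotProduct, star_trivial, dotProduct_comm]

open Matrix in
theorem jacobian_positive_det_trace_general (σ ν η' ρ : ℝ)
    (u g : EuclideanSpace ℝ (Fin 2))
    (hν : ν = ρ / ‖u‖)
    (w : EuclideanSpace ℝ (Fin 2))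
    (hw : w = (-(ρ * σ / ‖u‖ ^ 3)) • u + (η' * (ν - 1)) • g)
    (A : Matrix (Fin 2) (Fin 2) ℝ)
    (hA : A = (1 + σ * (ν - 1)) • (1 : Matrix (Fin 2) (Fin 2) ℝ) +
      Matrix.vecMulVec (fun i => u i) (fun i => w i))
    (hσ2 : σ ≤ 1) (hρ : 0 < ρ) (hρu : ρ < ‖u‖)
    (hη' : η' < 0) (hug : 0 < ⟪u, g⟫) :
    0 < A.det ∧ 0 < A.trace ∧ IsUnit A := by
  have hu : 0 < ‖u‖ := hρ.trans hρu
  have hν0 : 0 < ν := hν ▸ div_pos hρ hu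
  have hν1 : ν < 1 := hν ▸ (div_lt_one hu).mpr hρu
  set c := 1 + σ * (ν - 1)
  have hc : 0 < c := by nlinarith
  have huw : ⟪u, w⟫ = -(σ * ν) + η' * (ν - 1) * ⟪u, g⟫ := by
    rw [hw, inner_add_right, real_inner_smul_right, real_inner_smul_right,
      real_inner_self_eq_norm_sq, hν]
    field_simp
  have hcw : 0 < c + ⟪u, w⟫ := by
    rw [huw]
    nlinarith [mul_pos (mul_pos_of_neg_of_neg hη' (sub_neg.2 hν1)) hug]
  have hdet : A.det = c * (c + ⟪u, w⟫) := by
    rw [hA, det_fin_two_smul_one_add_vecMulVec, EuclideanSpace.dotProduct_eq_real_inner]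
  have htr : A.trace = c + (c + ⟪u, w⟫) := by
    rw [hA, trace_smul_one_add_vecMulVec, EuclideanSpace.dotProduct_eq_real_inner]
    simp only [Fintype.card_fin]
    ring
  have hdet_pos : 0 < A.det := hdet ▸ mul_pos hc hcw
  exact ⟨hdet_pos, htr ▸ add_pos hc hcw, (isUnit_iff_isUnit_det A).2 hdet_pos.ne'.isUnit⟩

/-- (Core of Proposition 1) For A = (1 + σ(ν − 1))·I + u·wᵀ with w = −(ρσ/‖u‖³)u + η'(ν − 1)g
and ν = ρ/‖u‖: if 0 < σ ≤ 1, 0 < ρ < ‖u‖, η' < 0 and ⟨u, g⟩ > 0, then det A > 0 and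
trace A > 0; in particular A is invertible. -/
theorem jacobian_positive_det_trace (σ ν η' ρ : ℝ)
    (u g : EuclideanSpace ℝ (Fin 2)) (hu : u ≠ 0)
    (hν : ν = ρ / ‖u‖)
    (w : EuclideanSpace ℝ (Fin 2))
    (hw : w = (-(ρ * σ / ‖u‖ ^ 3)) • u + (η' * (ν - 1)) • g)
    (A : Matrix (Fin 2) (Fin 2) ℝ)
    (hA : A = (1 + σ * (ν - 1)) • (1 : Matrix (Fin 2) (Fin 2) ℝ) +
      Matrix.vecMulVec (fun i => u i) (fun i => w i))
    (hσ1 : 0 < σ) (hσ2 : σ ≤ 1) (hρ : 0 < ρ) (hρu : ρ < ‖u‖)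
    (hη' : η' < 0) (hug : 0 < ⟪u, g⟫) :
    0 < A.det ∧ 0 < A.trace ∧ IsUnit A :=
  jacobian_positive_det_trace_general σ ν η' ρ u g hν w hw A hA hσ2 hρ hρu hη' hug
end
end

section
/- (Core of Proposition 2: obstacle avoidance at a star boundary point) Let ρ > 0, u ∈ ℝ² with u ≠ 0, g ∈ ℝ², q > 0, and let A = (ρ/‖u‖)·I + u·wᵀ with w = −(ρ/‖u‖³)·u + q·g. Assume det A ≠ 0. Then for every t ∈ ℝ² with ⟨t, u⟩ ≥ 0, the vector v = A⁻¹t satisfies ⟨v, g⟩ ≥ 0. -/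
noncomputable section
open RealInnerProductSpace Matrix

/-! Since `A v = (ρ/‖u‖) v + ⟪w, v⟫ u`, pairing `A v = t` with `u` makes the two `ρ`-terms cancel
and leaves `⟪t, u⟫ = q ‖u‖² ⟪v, g⟫`. -/

theorem inner_smul_add_inner_smul_self {F : Type*} [NormedAddCommGroup F]
    [InnerProductSpace ℝ F] {u : F} (hu : u ≠ 0) (c q : ℝ) (g v : F) :
    ⟪c • v + ⟪-(c / ‖u‖ ^ 2) • u + q • g, v⟫ • u, u⟫ = q * ‖u‖ ^ 2 * ⟪v, g⟫ := by
  have hu' : ‖u‖ ≠ 0 := norm_ne_zero_iff.mpr hu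
  simp only [inner_add_left, inner_smul_left, real_inner_self_eq_norm_sq, RCLike.conj_to_real,
    real_inner_comm u v, real_inner_comm g v]
  field_simp
  ring

theorem EuclideanSpace.smul_one_add_vecMulVec_mulVec {ι : Type*} [Fintype ι] [DecidableEq ι]
    (c : ℝ) (u w v : EuclideanSpace ℝ ι) :
    (c • (1 : Matrix ι ι ℝ) + vecMulVec u.ofLp w.ofLp) *ᵥ v.ofLp = (c • v + ⟪w, v⟫ • u).ofLp := by
  rw [add_mulVec, smul_mulVec, one_mulVec, vecMulVec_mulVec, EuclideanSpace.inner_eq_star_dotProduct]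
  ext i
  simp [dotProduct_comm]

theorem Matrix.mulVec_nonsing_inv_mulVec {n α : Type*} [Fintype n] [DecidableEq n] [CommRing α]
    {A : Matrix n n α} (hA : IsUnit A.det) (x : n → α) : A *ᵥ (A⁻¹ *ᵥ x) = x := by
  rw [mulVec_mulVec, mul_nonsing_inv A hA, one_mulVec]

theorem obstacle_avoidance_at_boundary_general (ρ q : ℝ) (hq : 0 < q)
    (u g : EuclideanSpace ℝ (Fin 2)) (hu : u ≠ 0)
    (w : EuclideanSpace ℝ (Fin 2))
    (hw : w = (-(ρ / ‖u‖ ^ 3)) • u + q • g)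
    (A : Matrix (Fin 2) (Fin 2) ℝ)
    (hA : A = (ρ / ‖u‖) • (1 : Matrix (Fin 2) (Fin 2) ℝ) +
      Matrix.vecMulVec (fun i => u i) (fun i => w i))
    (hdet : A.det ≠ 0) :
    ∀ t v : EuclideanSpace ℝ (Fin 2), ⟪t, u⟫ ≥ 0 →
      (∀ i, v i = A⁻¹.mulVec (fun j => t j) i) → ⟪v, g⟫ ≥ 0 := by
  intro t v ht hv
  have hAv : A *ᵥ v.ofLp = t.ofLp := by
    rw [show v.ofLp = A⁻¹ *ᵥ t.ofLp from funext hv, mulVec_nonsing_inv_mulVec hdet.isUnit]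
  have hcoef : ρ / ‖u‖ ^ 3 = ρ / ‖u‖ / ‖u‖ ^ 2 := by ring
  rw [hA, hw, hcoef, EuclideanSpace.smul_one_add_vecMulVec_mulVec] at hAv
  have hinner : ⟪t, u⟫ = q * ‖u‖ ^ 2 * ⟪v, g⟫ := by
    rw [← WithLp.ofLp_injective _ hAv, inner_smul_add_inner_smul_self hu]
  rw [hinner] at ht
  exact nonneg_of_mul_nonneg_right ht (by positivity)

/-- (Core of Proposition 2: obstacle avoidance at a star boundary point) Let
A = (ρ/‖u‖)·I + u·wᵀ with w = −(ρ/‖u‖³)u + q·g, where ρ > 0, q > 0, u ≠ 0 and det A ≠ 0.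
Then for every t with ⟨t, u⟩ ≥ 0, the vector v = A⁻¹t satisfies ⟨v, g⟩ ≥ 0. -/
theorem obstacle_avoidance_at_boundary (ρ q : ℝ) (hρ : 0 < ρ) (hq : 0 < q)
    (u g : EuclideanSpace ℝ (Fin 2)) (hu : u ≠ 0)
    (w : EuclideanSpace ℝ (Fin 2))
    (hw : w = (-(ρ / ‖u‖ ^ 3)) • u + q • g)
    (A : Matrix (Fin 2) (Fin 2) ℝ)
    (hA : A = (ρ / ‖u‖) • (1 : Matrix (Fin 2) (Fin 2) ℝ) +
      Matrix.vecMulVec (fun i => u i) (fun i => w i))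
    (hdet : A.det ≠ 0) :
    ∀ t v : EuclideanSpace ℝ (Fin 2), ⟪t, u⟫ ≥ 0 →
      (∀ i, v i = A⁻¹.mulVec (fun j => t j) i) → ⟪v, g⟫ ≥ 0 :=
  obstacle_avoidance_at_boundary_general ρ q hq u g hu w hw A hA hdet
end
end

section
/- (R-function conjunction) Let p = 2m for a natural number m ≥ 1. For all real numbers x₁, x₂: x₁ + x₂ − (x₁^p + x₂^p)^(1/p) ≥ 0 if and only if (x₁ ≥ 0 and x₂ ≥ 0). (Here (·)^(1/p) denotes the real power with exponent 1/p, and x₁^p + x₂^p ≥ 0 since p is even.) -/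
noncomputable section

lemma aux_pow_root (p : ℕ) (hp0 : p ≠ 0) {a : ℝ} (ha : 0 ≤ a) :
    (a ^ p) ^ ((1 : ℝ) / p) = a := by
  rw [← Real.rpow_natCast a p, ← Real.rpow_mul ha]
  rw [mul_one_div, div_self (by exact_mod_cast hp0), Real.rpow_one]

/-- (R-function conjunction) For an even exponent p = 2m (m ≥ 1) and all reals x₁, x₂:
x₁ + x₂ − (x₁^p + x₂^p)^(1/p) ≥ 0 if and only if x₁ ≥ 0 and x₂ ≥ 0. -/
theorem rfunction_conjunction (m : ℕ) (hm : 1 ≤ m) (p : ℕ) (hp : p = 2 * m) :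
    ∀ x₁ x₂ : ℝ,
      0 ≤ x₁ + x₂ - (x₁ ^ p + x₂ ^ p) ^ ((1 : ℝ) / p) ↔ (0 ≤ x₁ ∧ 0 ≤ x₂) := by
  have hpe : Even p := ⟨m, by omega⟩
  have hp0 : p ≠ 0 := by omega
  intro x₁ x₂
  have h1 : x₁ ^ p = |x₁| ^ p := (hpe.pow_abs x₁).symm
  have h2 : x₂ ^ p = |x₂| ^ p := (hpe.pow_abs x₂).symm
  have hs1 : 0 ≤ x₁ ^ p := hpe.pow_nonneg x₁
  have hs2 : 0 ≤ x₂ ^ p := hpe.pow_nonneg x₂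
  constructor
  · intro h
    have key : ∀ y : ℝ, y ^ p ≤ x₁ ^ p + x₂ ^ p → |y| ≤ (x₁ ^ p + x₂ ^ p) ^ ((1 : ℝ) / p) := by
      intro y hy
      have := Real.rpow_le_rpow (hpe.pow_nonneg y) hy
        (by positivity : (0:ℝ) ≤ (1:ℝ)/p)
      rwa [← hpe.pow_abs y, aux_pow_root p hp0 (abs_nonneg y)] at this
    have k1 : |x₁| ≤ (x₁ ^ p + x₂ ^ p) ^ ((1 : ℝ) / p) :=
      key x₁ (by linarith)
    have k2 : |x₂| ≤ (x₁ ^ p + x₂ ^ p) ^ ((1 : ℝ) / p) :=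
      key x₂ (by linarith)
    have a1 := le_abs_self x₁
    have a2 := le_abs_self x₂
    exact ⟨by linarith, by linarith⟩
  · rintro ⟨h1', h2'⟩
    have hle : x₁ ^ p + x₂ ^ p ≤ (x₁ + x₂) ^ p := pow_add_pow_le h1' h2' hp0
    have := Real.rpow_le_rpow (by linarith) hle (by positivity : (0:ℝ) ≤ (1:ℝ)/p)
    rw [aux_pow_root p hp0 (by linarith)] at this
    linarith
end
end

section
/- (R-function disjunction) Let p = 2m for a natural number m ≥ 1. For all real numbers x₁, x₂: x₁ + x₂ + (x₁^p + x₂^p)^(1/p) ≥ 0 if and only if (x₁ ≥ 0 or x₂ ≥ 0). (Here (·)^(1/p) denotes the real power with exponent 1/p, and x₁^p + x₂^p ≥ 0 since p is even.) -/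
noncomputable section

/-- (R-function disjunction) For an even exponent p = 2m (m ≥ 1) and all reals x₁, x₂:
x₁ + x₂ + (x₁^p + x₂^p)^(1/p) ≥ 0 if and only if x₁ ≥ 0 or x₂ ≥ 0. -/
theorem rfunction_disjunction (m : ℕ) (hm : 1 ≤ m) (p : ℕ) (hp : p = 2 * m) :
    ∀ x₁ x₂ : ℝ,
      0 ≤ x₁ + x₂ + (x₁ ^ p + x₂ ^ p) ^ ((1 : ℝ) / p) ↔ (0 ≤ x₁ ∨ 0 ≤ x₂) := by
  have hev : Even p := ⟨m, by omega⟩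
  have hpne : p ≠ 0 := by omega
  have hp2 : 2 ≤ p := by omega
  have hppos : (0:ℝ) < p := by exact_mod_cast Nat.pos_of_ne_zero hpne
  have hpow_eq : ∀ z : ℝ, 0 ≤ z → (z ^ p) ^ ((1:ℝ)/p) = z := by
    intro z hz
    rw [← Real.rpow_natCast z p, ← Real.rpow_mul hz, mul_one_div,
      div_self (ne_of_gt hppos), Real.rpow_one]
  have habs : ∀ x y : ℝ, |y| ≤ (x ^ p + y ^ p) ^ ((1:ℝ)/p) := by
    intro x y
    have h1 : |y| ^ p ≤ x ^ p + y ^ p := by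
      rw [hev.pow_abs]
      nlinarith [pow_nonneg (abs_nonneg x) p, hev.pow_abs (a := x)]
    calc |y| = (|y| ^ p) ^ ((1:ℝ)/p) := (hpow_eq _ (abs_nonneg y)).symm
      _ ≤ _ := Real.rpow_le_rpow (by positivity) h1 (by positivity)
  intro x₁ x₂
  constructor
  · intro h
    by_contra hc
    push_neg at hc
    obtain ⟨h1, h2⟩ := hc
    set a := -x₁ with ha'
    set b := -x₂ with hb'
    have ha : 0 < a := by simp [ha']; linarith
    have hb : 0 < b := by simp [hb']; linarith
    have hx1 : x₁ ^ p = a ^ p := by rw [ha', hev.neg_pow]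
    have hx2 : x₂ ^ p = b ^ p := by rw [hb', hev.neg_pow]
    have hlt : a ^ p + b ^ p < (a + b) ^ p := by
      have hle : a ^ (p-1) + b ^ (p-1) ≤ (a + b) ^ (p-1) :=
        pow_add_pow_le ha.le hb.le (by omega)
      have h3 : a ^ p + b ^ p < (a + b) * (a ^ (p-1) + b ^ (p-1)) := by
        have e1 : a ^ p = a * a ^ (p-1) := by
          rw [← pow_succ']; congr 1; omega
        have e2 : b ^ p = b * b ^ (p-1) := by
          rw [← pow_succ']; congr 1; omega
        have p1 : 0 < a ^ (p-1) := pow_pos ha _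
        have p2 : 0 < b ^ (p-1) := pow_pos hb _
        rw [e1, e2]; nlinarith
      calc a ^ p + b ^ p < (a + b) * (a ^ (p-1) + b ^ (p-1)) := h3
        _ ≤ (a + b) * (a + b) ^ (p-1) := by
            apply mul_le_mul_of_nonneg_left hle (by linarith)
        _ = (a + b) ^ p := by rw [← pow_succ']; congr 1; omega
    have hr : (x₁ ^ p + x₂ ^ p) ^ ((1:ℝ)/p) < a + b := by
      rw [hx1, hx2]
      calc (a ^ p + b ^ p) ^ ((1:ℝ)/p)
          < ((a + b) ^ p) ^ ((1:ℝ)/p) :=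
            Real.rpow_lt_rpow (by positivity) hlt (by positivity)
        _ = a + b := hpow_eq _ (by linarith)
    have : x₁ + x₂ = -(a + b) := by rw [ha', hb']; ring
    linarith
  · rintro (h | h)
    · linarith [habs x₁ x₂, neg_abs_le x₂]
    · have h3 := habs x₂ x₁
      have h2 : x₂ ^ p + x₁ ^ p = x₁ ^ p + x₂ ^ p := by ring
      rw [h2] at h3
      linarith [neg_abs_le x₁]
end
end
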